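/- For every nondeterministic Büchi automaton A over a finite alphabet Σ there exist m ≥ 0 and regular languages S₁,T₁,…,S_m,T_m ⊆ Σ^* (languages of finite-word nondeterministic finite automata) such that L(A) = ∪_{i=1}^m S_i · T_i^ω, where S·T^ω denotes the set of infinite words of the form x·y₁y₂⋯ ∈ Σ^ω with x ∈ S and y_j ∈ T for all j ≥ 1. -/

import Mathlib

open scoped Classical

/-- A (nondeterministic) Büchi automaton over alphabet `A`, with a finite state set. -/
structure BuchiAutomaton (A : Type) : Type 1 where
  Q : Type
  fin : Fintype Q
  step : Q → A → Set Q
  init : Set Q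
  accept : Set Q

attribute [instance] BuchiAutomaton.fin

/-- A run of the automaton on an infinite word. -/
def BuchiAutomaton.IsRun {A : Type} (M : BuchiAutomaton A) (w : ℕ → A) (ρ : ℕ → M.Q) : Prop :=
  ρ 0 ∈ M.init ∧ ∀ i, ρ (i + 1) ∈ M.step (ρ i) (w i)

/-- The language of a Büchi automaton: words admitting a run visiting the accepting set
infinitely often. -/
def BuchiAutomaton.lang {A : Type} (M : BuchiAutomaton A) : Set (ℕ → A) :=
  {w | ∃ ρ, M.IsRun w ρ ∧ ∀ n, ∃ m, n ≤ m ∧ ρ m ∈ M.accept}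

/-- A Büchi automaton is deterministic if it has a unique initial state and
every transition set is a singleton. -/
def BuchiAutomaton.Deterministic {A : Type} (M : BuchiAutomaton A) : Prop :=
  (∃ q, M.init = {q}) ∧ ∀ q a, ∃ p, M.step q a = {p}

/-- Parikh image of an infinite word: number of occurrences of each letter (`⊤` if infinite). -/
noncomputable def parikhInf {A : Type} (w : ℕ → A) : A → ℕ∞ :=
  fun a => {i : ℕ | w i = a}.encard

/-- The jumping language of a Büchi automaton. -/
def JumpLang {A : Type} (M : BuchiAutomaton A) : Set (ℕ → A) :=
  {w | ∃ w', parikhInf w' = parikhInf w ∧ w' ∈ M.lang}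

/-- Number of occurrences of letter `a` in the `i`-th window of size `k` of `w`. -/
noncomputable def winCount {A : Type} (w : ℕ → A) (k i : ℕ) (a : A) : ℕ :=
  {j : ℕ | k * i ≤ j ∧ j < k * i + k ∧ w j = a}.ncard

/-- `w` and `w'` are `k`-window permutations of each other. -/
def KWinPerm {A : Type} (k : ℕ) (w w' : ℕ → A) : Prop :=
  ∀ i a, winCount w k i a = winCount w' k i a

/-- The `k`-window jumping language of a Büchi automaton. -/
def KWinLang {A : Type} (M : BuchiAutomaton A) (k : ℕ) : Set (ℕ → A) :=
  {w | ∃ w', KWinPerm k w' w ∧ w' ∈ M.lang}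

/-- The `∃`-window jumping language of a Büchi automaton. -/
def EWinLang {A : Type} (M : BuchiAutomaton A) : Set (ℕ → A) :=
  {w | ∃ k, 1 ≤ k ∧ ∃ w', KWinPerm k w' w ∧ w' ∈ M.lang}

/-- Linear subsets of `ℕ^A`. -/
def IsLinearSetVec {A : Type} (R : Set (A → ℕ)) : Prop :=
  ∃ (b : A → ℕ) (P : Finset (A → ℕ)),
    R = {v | ∃ c : (A → ℕ) → ℕ, v = b + ∑ p ∈ P, c p • p}

/-- Semilinear sets: finite unions of linear sets. -/
def IsSemilinearSetVec {A : Type} (R : Set (A → ℕ)) : Prop :=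
  ∃ (n : ℕ) (f : Fin n → Set (A → ℕ)), (∀ i, IsLinearSetVec (f i)) ∧ R = ⋃ i, f i

/-- A mask: a vector over `{0,∞}` with at least one `∞` coordinate. -/
def IsMask {A : Type} (m : A → ℕ∞) : Prop :=
  (∀ a, m a = 0 ∨ m a = ⊤) ∧ ∃ a, m a = ⊤

/-- Adding a mask to a vector of naturals. -/
def maskAdd {A : Type} (x : A → ℕ) (m : A → ℕ∞) : A → ℕ∞ :=
  fun a => (x a : ℕ∞) + m a

/-- Adding a mask to a set of vectors, `R + m`. -/
def maskAddSet {A : Type} (R : Set (A → ℕ)) (m : A → ℕ∞) : Set (A → ℕ∞) :=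
  (fun x => maskAdd x m) '' R

/-- `𝕄^A`: extended-natural vectors with at least one `∞` coordinate. -/
def MVecs (A : Type) : Set (A → ℕ∞) := {v | ∃ a, v a = ⊤}

/-- Masked semilinear set: a union `⋃_m (S_m + m)` over all masks `m`, with each `S_m`
semilinear. -/
def IsMaskedSemilinear {A : Type} (S : Set (A → ℕ∞)) : Prop :=
  ∃ F : (A → ℕ∞) → Set (A → ℕ),
    (∀ m, IsMask m → IsSemilinearSetVec (F m)) ∧
    S = ⋃ m ∈ {m' : A → ℕ∞ | IsMask m'}, maskAddSet (F m) m

/-- `R` is `m`-oblivious: membership only depends on the `m`-equivalence class. -/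
def MOblivious {A : Type} (m : A → ℕ∞) (R : Set (A → ℕ)) : Prop :=
  ∀ u v : A → ℕ, maskAdd u m = maskAdd v m → (u ∈ R ↔ v ∈ R)

/-- `E_m`: unit vectors at the `∞` coordinates of the mask `m`. -/
noncomputable def maskUnits {A : Type} [Fintype A] [DecidableEq A] (m : A → ℕ∞) :
    Finset (A → ℕ) :=
  (Finset.univ.filter (fun a => m a = ⊤)).image (fun a => Pi.single a 1)

/-- `R` is in canonical `m`-oblivious form. -/
def CanonicalOblivious {A : Type} [Fintype A] [DecidableEq A] (m : A → ℕ∞)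
    (R : Set (A → ℕ)) : Prop :=
  ∃ (n : ℕ) (b : Fin n → (A → ℕ)) (P : Fin n → Finset (A → ℕ)),
    (∀ i a, m a = ⊤ → b i a = 0) ∧
    (∀ i p, p ∈ P i → ∀ a, m a = ⊤ → p a = 0) ∧
    R = ⋃ i, {v | ∃ c : (A → ℕ) → ℕ, v = b i + ∑ p ∈ (P i ∪ maskUnits m), c p • p}

/-- A language of finite words is regular if it is recognized by a nondeterministic finite
automaton with finitely many states. -/
def IsRegularLang {A : Type} (L : Language A) : Prop :=
  ∃ (Q : Type) (_ : Fintype Q) (M : NFA A Q), M.accepts = L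

/-- The finite prefix `x · y₀ · y₁ ⋯ y_{j-1}` of the infinite concatenation. -/
def catPrefix {A : Type} (x : List A) (y : ℕ → List A) : ℕ → List A
  | 0 => x
  | j + 1 => catPrefix x y j ++ y j

/-- Membership of an infinite word `w` in `S · T^ω`: `w = x · y₁ y₂ ⋯` with `x ∈ S` and all
`y_j ∈ T`. -/
def InOmegaCat {A : Type} (S T : Language A) (w : ℕ → A) : Prop :=
  ∃ (x : List A) (y : ℕ → List A),
    x ∈ S ∧ (∀ j, y j ∈ T) ∧
    (∀ n : ℕ, ∃ j, n < (catPrefix x y j).length) ∧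
    (∀ j i (h : i < (catPrefix x y j).length), (catPrefix x y j).get ⟨i, h⟩ = w i)

/-
An accepting run visits some accepting state `q` infinitely often. Cutting the word at these
visits factors it as a word leading from an initial state to `q` followed by nonempty loops from
`q` back to `q`; conversely, paths along such a factorisation glue together to an accepting run.
Both kinds of words form languages of the automaton itself read as an NFA, so they are regular.
-/

theorem IsRegularLang.isRegular {A : Type} {L : Language A} (h : IsRegularLang L) :
    L.IsRegular :=
  let ⟨_, _, N, hN⟩ := h
  ⟨_, inferInstance, N.toDFA, by rw [N.toDFA_correct, hN]⟩

theorem Language.IsRegular.isRegularLang {A : Type} {L : Language A} (h : L.IsRegular) :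
    IsRegularLang L :=
  let ⟨_, _, D, hD⟩ := h
  ⟨_, inferInstance, D.toNFA, by rw [D.toNFA_correct, hD]⟩

theorem Language.isRegular_one (A : Type) : (1 : Language A).IsRegular := by
  refine ⟨Bool, inferInstance, ⟨fun _ _ => false, true, {true}⟩, ?_⟩
  ext (_ | ⟨a, u⟩)
  · simp [DFA.mem_accepts, DFA.eval, Language.mem_one]
  · simp [DFA.mem_accepts, DFA.eval, DFA.evalFrom, List.foldl_fixed', Language.mem_one]

section Extract

variable {A : Type} (w : ℕ → A)

def extract (i j : ℕ) : List A := List.ofFn fun t : Fin (j - i) => w (i + t)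

@[simp] theorem length_extract (i j : ℕ) : (extract w i j).length = j - i :=
  List.length_ofFn

@[simp] theorem getElem_extract {i j t : ℕ} (ht : t < (extract w i j).length) :
    (extract w i j)[t] = w (i + t) :=
  List.getElem_ofFn ..

theorem extract_eq_cons {i j : ℕ} (hij : i < j) : extract w i j = w i :: extract w (i + 1) j := by
  refine List.ext_getElem (by simp; omega) fun t h₁ h₂ => ?_
  cases t <;> simp [Nat.add_assoc, Nat.add_comm 1]

theorem extract_append_extract {i j k : ℕ} (hij : i ≤ j) (hjk : j ≤ k) :
    extract w i j ++ extract w j k = extract w i k := by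
  refine List.ext_getElem (by simp; omega) fun t h₁ h₂ => ?_
  rw [List.getElem_append]
  split_ifs with h
  · simp
  · simp only [getElem_extract, length_extract] at h ⊢
    congr 1
    omega

end Extract

namespace BuchiAutomaton

variable {A : Type} (M : BuchiAutomaton A)

@[simps] def toNFA (S F : Set M.Q) : NFA A M.Q := ⟨M.step, S, F⟩

def IsPathOn (w : ℕ → A) (ρ : ℕ → M.Q) (i j : ℕ) : Prop :=
  ∀ n, i ≤ n → n < j → ρ (n + 1) ∈ M.step (ρ n) (w n)

variable {M}

theorem IsPathOn.congr {w : ℕ → A} {ρ ρ' : ℕ → M.Q} {i j : ℕ} (h : M.IsPathOn w ρ i j)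
    (hρ : ∀ n, i ≤ n → n ≤ j → ρ n = ρ' n) : M.IsPathOn w ρ' i j := fun n h₁ h₂ => by
  rw [← hρ n h₁ h₂.le, ← hρ (n + 1) (by omega) h₂]
  exact h n h₁ h₂

theorem IsPathOn.trans {w : ℕ → A} {ρ : ℕ → M.Q} {i j k : ℕ} (h₁ : M.IsPathOn w ρ i j)
    (h₂ : M.IsPathOn w ρ j k) : M.IsPathOn w ρ i k := fun n hi hk =>
  if hj : n < j then h₁ n hi hj else h₂ n (not_lt.1 hj) hk

theorem isPathOn_iff_succ {w : ℕ → A} {ρ : ℕ → M.Q} {i j : ℕ} (hij : i < j) :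
    M.IsPathOn w ρ i j ↔ ρ (i + 1) ∈ M.step (ρ i) (w i) ∧ M.IsPathOn w ρ (i + 1) j := by
  refine ⟨fun h => ⟨h i le_rfl hij, fun n h₁ h₂ => h n (by omega) h₂⟩, fun ⟨hi, h⟩ n h₁ h₂ => ?_⟩
  rcases h₁.eq_or_lt with rfl | h₁
  exacts [hi, h n h₁ h₂]

theorem mem_evalFrom_extract_iff {S F : Set M.Q} {w : ℕ → A} {i j : ℕ} (hij : i ≤ j)
    {p q : M.Q} : q ∈ (M.toNFA S F).evalFrom {p} (extract w i j) ↔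
      ∃ ρ, ρ i = p ∧ ρ j = q ∧ M.IsPathOn w ρ i j := by
  induction hij using Nat.decreasingInduction generalizing p with
  | self =>
    simp only [extract, Nat.sub_self, List.ofFn_zero, NFA.evalFrom_nil, Set.mem_singleton_iff]
    refine ⟨fun h => ⟨fun _ => p, rfl, h.symm, fun n h₁ h₂ => absurd h₂ (by omega)⟩, ?_⟩
    rintro ⟨ρ, rfl, rfl, -⟩
    rfl
  | of_succ i hij ih =>
    rw [extract_eq_cons _ hij, NFA.evalFrom_cons, NFA.stepSet_singleton,
      NFA.mem_evalFrom_iff_exists]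
    simp only [ih]
    constructor
    · rintro ⟨_, ht, ρ, rfl, rfl, hρ⟩
      refine ⟨Function.update ρ i p, by simp, by simp [hij.ne'], ?_⟩
      refine (isPathOn_iff_succ hij).2 ⟨by simpa using ht, hρ.congr fun n h₁ _ => ?_⟩
      simp [show n ≠ i by omega]
    · rintro ⟨ρ, rfl, rfl, hρ⟩
      rw [isPathOn_iff_succ hij] at hρ
      exact ⟨_, hρ.1, ρ, rfl, rfl, hρ.2⟩

variable (M)

def initLang (q : M.Q) : Language A := (M.toNFA M.init {q}).accepts

-- Without the empty word, the cut points of a factorisation into loops increase strictly.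
def loopLang (q : M.Q) : Language A := (M.toNFA {q} {q}).accepts ⊓ 1ᶜ

theorem isRegularLang_initLang (q : M.Q) : IsRegularLang (M.initLang q) :=
  ⟨M.Q, inferInstance, _, rfl⟩

theorem isRegularLang_loopLang (q : M.Q) : IsRegularLang (M.loopLang q) :=
  (IsRegularLang.isRegular ⟨M.Q, inferInstance, _, rfl⟩).inf
    (Language.isRegular_one A).compl |>.isRegularLang

theorem nil_notMem_loopLang (q : M.Q) : [] ∉ M.loopLang q := fun h => h.2 rfl

variable {M}

theorem extract_zero_mem_initLang_iff {w : ℕ → A} {i : ℕ} {q : M.Q} :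
    extract w 0 i ∈ M.initLang q ↔ ∃ ρ, ρ 0 ∈ M.init ∧ ρ i = q ∧ M.IsPathOn w ρ 0 i := by
  simp only [initLang, NFA.mem_accepts, toNFA_accept, Set.mem_singleton_iff, exists_eq_left,
    NFA.mem_evalFrom_iff_exists, mem_evalFrom_extract_iff (Nat.zero_le i), toNFA_start]
  constructor
  · rintro ⟨p, hp, ρ, rfl, hρ⟩
    exact ⟨ρ, hp, hρ⟩
  · rintro ⟨ρ, hp, hρ⟩
    exact ⟨_, hp, ρ, rfl, hρ⟩

theorem extract_mem_loopLang_iff {w : ℕ → A} {i j : ℕ} (hij : i < j) {q : M.Q} :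
    extract w i j ∈ M.loopLang q ↔ ∃ ρ, ρ i = q ∧ ρ j = q ∧ M.IsPathOn w ρ i j := by
  have hne : extract w i j ≠ [] := List.ne_nil_of_length_pos (by simp; omega)
  simp only [loopLang, Language.mem_inf, NFA.mem_accepts, toNFA_accept, toNFA_start,
    Set.mem_singleton_iff, exists_eq_left, mem_evalFrom_extract_iff hij.le]
  exact and_iff_left hne

variable (M) in
def gluePaths (e : ℕ → ℕ) (σ₀ : ℕ → M.Q) (σ : ℕ → ℕ → M.Q) : ℕ → ℕ → M.Q
  | 0, n => σ₀ n
  | k + 1, n => if n ≤ e k then gluePaths e σ₀ σ k n else σ k n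

theorem gluePaths_of_le {e : ℕ → ℕ} (he : Monotone e) {σ₀ : ℕ → M.Q} {σ : ℕ → ℕ → M.Q}
    {k m n : ℕ} (hkm : k ≤ m) (hn : n ≤ e k) :
    M.gluePaths e σ₀ σ m n = M.gluePaths e σ₀ σ k n := by
  induction m, hkm using Nat.le_induction with
  | base => rfl
  | succ m hkm ih => rw [gluePaths, if_pos (hn.trans (he hkm)), ih]

theorem isPathOn_gluePaths {w : ℕ → A} {e : ℕ → ℕ} (he : StrictMono e) {q : M.Q}
    {σ₀ : ℕ → M.Q} (h₀ : σ₀ (e 0) = q) (hσ₀ : M.IsPathOn w σ₀ 0 (e 0)) {σ : ℕ → ℕ → M.Q}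
    (hσ : ∀ k, σ k (e k) = q ∧ σ k (e (k + 1)) = q ∧ M.IsPathOn w (σ k) (e k) (e (k + 1)))
    (k : ℕ) : M.gluePaths e σ₀ σ k (e k) = q ∧ M.IsPathOn w (M.gluePaths e σ₀ σ k) 0 (e k) := by
  induction k with
  | zero => exact ⟨h₀, hσ₀⟩
  | succ k ih =>
    obtain ⟨hstart, hend, hpath⟩ := hσ k
    have hlt : e k < e (k + 1) := he k.lt_succ_self
    refine ⟨by simp [gluePaths, hlt.not_ge, hend], ?_⟩
    refine (ih.2.congr fun n _ hn => ?_).trans (hpath.congr fun n hn _ => ?_)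
    · simp [gluePaths, hn]
    · rcases hn.eq_or_lt with rfl | hn
      · simp [gluePaths, ih.1, hstart]
      · simp [gluePaths, hn.not_ge]

theorem exists_run_of_loops {w : ℕ → A} {e : ℕ → ℕ} (he : StrictMono e) {q : M.Q}
    {σ₀ : ℕ → M.Q} (hinit : σ₀ 0 ∈ M.init) (h₀ : σ₀ (e 0) = q) (hσ₀ : M.IsPathOn w σ₀ 0 (e 0))
    {σ : ℕ → ℕ → M.Q}
    (hσ : ∀ k, σ k (e k) = q ∧ σ k (e (k + 1)) = q ∧ M.IsPathOn w (σ k) (e k) (e (k + 1))) :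
    ∃ ρ, M.IsRun w ρ ∧ ∀ k, ρ (e k) = q := by
  have hglue := isPathOn_gluePaths he h₀ hσ₀ hσ
  -- The finite runs `gluePaths … k` extend each other, so their diagonal is an infinite run.
  refine ⟨fun n => M.gluePaths e σ₀ σ n n, ⟨hinit, fun n => ?_⟩, fun k => ?_⟩
  · dsimp only
    rw [← gluePaths_of_le he.monotone n.le_succ he.le_apply]
    exact (hglue (n + 1)).2 n (Nat.zero_le n) (Nat.lt_of_lt_of_le n.lt_succ_self he.le_apply)
  · dsimp only
    rw [gluePaths_of_le he.monotone he.le_apply le_rfl]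
    exact (hglue k).1

variable (M) in
theorem mem_lang_iff {w : ℕ → A} : w ∈ M.lang ↔ ∃ q ∈ M.accept, ∃ e : ℕ → ℕ, StrictMono e ∧
    extract w 0 (e 0) ∈ M.initLang q ∧ ∀ k, extract w (e k) (e (k + 1)) ∈ M.loopLang q := by
  constructor
  · rintro ⟨ρ, ⟨hinit, hstep⟩, hacc⟩
    obtain ⟨q, hq⟩ : ∃ q, ∃ᶠ n in Filter.atTop, q ∈ M.accept ∧ ρ n = q :=
      Filter.frequently_exists.1 ((Filter.frequently_atTop.2 hacc).mono fun n h => ⟨ρ n, h, rfl⟩)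
    have hinf : {n | ρ n = q}.Infinite :=
      Nat.frequently_atTop_iff_infinite.1 (hq.mono fun _ => And.right)
    have hρe : ∀ k, ρ (Nat.nth (ρ · = q) k) = q := Nat.nth_mem_of_infinite hinf
    have hpath : ∀ i j, M.IsPathOn w ρ i j := fun i j n _ _ => hstep n
    refine ⟨q, hq.exists.elim fun _ h => h.1, _, Nat.nth_strictMono hinf,
      extract_zero_mem_initLang_iff.2 ⟨ρ, hinit, hρe 0, hpath _ _⟩, fun k => ?_⟩
    exact (extract_mem_loopLang_iff (Nat.nth_strictMono hinf k.lt_succ_self)).2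
      ⟨ρ, hρe k, hρe (k + 1), hpath _ _⟩
  · rintro ⟨q, hq, e, he, h₀, hloop⟩
    obtain ⟨σ₀, hinit, hσ₀q, hσ₀⟩ := extract_zero_mem_initLang_iff.1 h₀
    choose σ hσ using fun k => (extract_mem_loopLang_iff (he k.lt_succ_self)).1 (hloop k)
    obtain ⟨ρ, hρ, hρe⟩ := exists_run_of_loops he hinit hσ₀q hσ₀ hσ
    exact ⟨ρ, hρ, fun n => ⟨e n, he.le_apply, hρe n ▸ hq⟩⟩

end BuchiAutomaton

section OmegaCat

variable {A : Type}

theorem eq_extract_of_get {l : List A} {w : ℕ → A}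
    (h : ∀ i (hi : i < l.length), l.get ⟨i, hi⟩ = w i) : l = extract w 0 l.length :=
  List.ext_getElem (by simp) fun i hi _ => by simpa using h i hi

theorem inOmegaCat_iff {S T : Language A} (hT : [] ∉ T) {w : ℕ → A} :
    InOmegaCat S T w ↔ ∃ e : ℕ → ℕ, StrictMono e ∧
      extract w 0 (e 0) ∈ S ∧ ∀ k, extract w (e k) (e (k + 1)) ∈ T := by
  constructor
  · rintro ⟨x, y, hx, hy, -, hget⟩
    set L := fun j => (catPrefix x y j).length
    have hpre : ∀ j, catPrefix x y j = extract w 0 (L j) := fun j => eq_extract_of_get (hget j)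
    have hL : ∀ j, L (j + 1) = L j + (y j).length := fun j => by simp [L, catPrefix]
    have he : StrictMono L := strictMono_nat_of_lt_succ fun j => by
      have := List.length_pos_iff.2 (ne_of_mem_of_not_mem (hy j) hT)
      rw [hL]
      omega
    have hblock : ∀ j, y j = extract w (L j) (L (j + 1)) := fun j => by
      have h := hpre (j + 1)
      rw [catPrefix, hpre j, ← extract_append_extract w (Nat.zero_le _) (he j.lt_succ_self).le] at h
      exact List.append_cancel_left h
    exact ⟨L, he, hpre 0 ▸ hx, fun j => hblock j ▸ hy j⟩
  · rintro ⟨e, he, h₀, hloop⟩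
    have hpre : ∀ j, catPrefix (extract w 0 (e 0)) (fun k => extract w (e k) (e (k + 1))) j =
        extract w 0 (e j) := fun j => by
      induction j with
      | zero => rfl
      | succ j ih =>
        rw [catPrefix, ih, extract_append_extract w (Nat.zero_le _) (he j.lt_succ_self).le]
    refine ⟨_, _, h₀, hloop, fun n => ⟨n + 1, ?_⟩, fun j i hi => ?_⟩
    · simpa [hpre] using Nat.lt_of_lt_of_le n.lt_succ_self he.le_apply
    · simp [List.getElem_of_eq (hpre j)]

end OmegaCat

theorem buchi_lang_eq_union_omega_cat_general (A : Type) (M : BuchiAutomaton A) :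
    ∃ (m : ℕ) (S T : Fin m → Language A),
      (∀ i, IsRegularLang (S i)) ∧ (∀ i, IsRegularLang (T i)) ∧
      M.lang = ⋃ i, {w | InOmegaCat (S i) (T i) w} := by
  let e := (Fintype.equivFin {q // q ∈ M.accept}).symm
  refine ⟨_, fun i => M.initLang (e i), fun i => M.loopLang (e i),
    fun i => M.isRegularLang_initLang _, fun i => M.isRegularLang_loopLang _, ?_⟩
  ext w
  simp only [M.mem_lang_iff, Set.mem_iUnion, Set.mem_ofPred_eq,
    inOmegaCat_iff (M.nil_notMem_loopLang _)]
  exact ⟨fun ⟨q, hq, h⟩ => ⟨e.symm ⟨q, hq⟩, by simpa using h⟩, fun ⟨i, h⟩ => ⟨_, (e i).2, h⟩⟩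

/-- The language of every Büchi automaton is a finite union
`⋃_{i=1}^m S_i · T_i^ω` with all `S_i, T_i` regular languages of finite words. -/
theorem buchi_lang_eq_union_omega_cat (A : Type) [Fintype A] (M : BuchiAutomaton A) :
    ∃ (m : ℕ) (S T : Fin m → Language A),
      (∀ i, IsRegularLang (S i)) ∧ (∀ i, IsRegularLang (T i)) ∧
      M.lang = ⋃ i, {w | InOmegaCat (S i) (T i) w} :=
  buchi_lang_eq_union_omega_cat_general A M
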